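/- Let F(s) = ∏_{m∈Λ}(1-e^{-sm})^{-1} for Λ ⊆ ℕ* and ρ > 0. Suppose S ⊆ Λ is a finite set of integers m ≤ 1/ρ such that ‖mt/2π‖ ≥ 1/(3q) for all m ∈ S (for some fixed q ≥ 1 and some t ∈ ℝ). Then |F(ρ + it)|/F(ρ) ≤ (1 + 5/(9 q² (max S)² ρ²))^{-|S|/2}. -/

import Mathlib

/-!
With `s = ρ + i t`, every Euler factor obeys `|1 - e^{-sm}| ≥ 1 - e^{-ρm}`, which compares `F(s)`
with `F(ρ)` factor by factor. For `m ∈ S` there is a gain: `|1 - e^{-sm}|² = (1 - e^{-ρm})² +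
4 e^{-ρm} sin²(mt/2)`, where Jordan's inequality gives `|sin(mt/2)| ≥ 2‖mt/2π‖ ≥ 2/(3q)`, while
`(1 - e^{-x})² ≤ (16/5) x² e^{-x}` for `x = ρm ≤ ρ max S ≤ 1`. Hence each of the `|S|` factors
indexed by `S` is smaller by at least `(1 + 5/(9 q² (max S)² ρ²))^{-1/2}`.
-/

/-- The distance from a real number to the nearest integer. -/
noncomputable def intDist (θ : ℝ) : ℝ := |θ - round θ|

open Real

lemma rpow_neg_natCast_div_two {x : ℝ} (hx : 0 ≤ x) (n : ℕ) :
    x ^ (-(n : ℝ) / 2) = (x ^ (-(1 / 2 : ℝ))) ^ n := by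
  rw [← rpow_natCast, ← rpow_mul hx]
  ring_nf

-- `16 / 5` is a rational upper bound for `e = (exp (-1))⁻¹`, the worst case `x = 1`.
lemma sq_one_sub_exp_neg_le {x : ℝ} (hx₀ : 0 ≤ x) (hx₁ : x ≤ 1) :
    (1 - exp (-x)) ^ 2 ≤ 16 / 5 * x ^ 2 * exp (-x) := by
  have hpos : 0 ≤ 1 - exp (-x) := by simp [hx₀]
  have hle : 1 - exp (-x) ≤ x := by linarith [add_one_le_exp (-x)]
  have hexp : 5 / 16 ≤ exp (-x) :=
    calc (5 / 16 : ℝ) ≤ exp (-1) := by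
          rw [exp_neg, le_inv_comm₀ (by norm_num) (exp_pos 1)]
          linarith [exp_one_lt_d9]
      _ ≤ exp (-x) := exp_le_exp.2 (by linarith)
  nlinarith

lemma two_mul_intDist_le_abs_sin_pi_mul (θ : ℝ) : 2 * intDist θ ≤ |sin (π * θ)| := by
  have hround : |sin (π * θ)| = |sin (π * (θ - round θ))| := by
    rw [mul_sub, mul_comm π (round θ : ℝ), sin_sub_int_mul_pi, abs_mul, abs_neg_one_zpow, one_mul]
  have hjordan := mul_abs_le_abs_sin (x := π * (θ - round θ)) (by
    rw [abs_mul, abs_of_pos pi_pos]; nlinarith [pi_pos, abs_sub_round θ])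
  rw [abs_mul, abs_of_pos pi_pos, ← mul_assoc, div_mul_cancel₀ _ pi_ne_zero] at hjordan
  rwa [hround, intDist]

lemma norm_one_sub_exp_sq (z : ℂ) :
    ‖1 - Complex.exp z‖ ^ 2 = (1 - exp z.re) ^ 2 + 4 * exp z.re * sin (z.im / 2) ^ 2 := by
  have hhalf : z.im = 2 * (z.im / 2) := by ring
  rw [Complex.sq_norm, Complex.normSq_apply]
  simp only [Complex.sub_re, Complex.sub_im, Complex.one_re, Complex.one_im, Complex.exp_re,
    Complex.exp_im]
  rw [hhalf, cos_two_mul, sin_two_mul, ← hhalf]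
  linear_combination
    (4 * exp z.re ^ 2 * cos (z.im / 2) ^ 2 - 4 * exp z.re) * sin_sq_add_cos_sq (z.im / 2)

lemma mul_sq_one_sub_exp_neg_le {x X δ s : ℝ} (hx₀ : 0 ≤ x) (hxX : x ≤ X) (hX : X ≤ 1)
    (hδ : 0 ≤ δ) (hs : 2 * δ ≤ |s|) :
    5 * δ ^ 2 / X ^ 2 * (1 - exp (-x)) ^ 2 ≤ 4 * exp (-x) * s ^ 2 := by
  have hs₂ : 4 * δ ^ 2 ≤ s ^ 2 := by nlinarith [sq_abs s]
  calc 5 * δ ^ 2 / X ^ 2 * (1 - exp (-x)) ^ 2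
      ≤ 5 * δ ^ 2 / X ^ 2 * (16 / 5 * X ^ 2 * exp (-x)) := by
        gcongr
        calc _ ≤ 16 / 5 * x ^ 2 * exp (-x) := sq_one_sub_exp_neg_le hx₀ (hxX.trans hX)
          _ ≤ _ := by gcongr
    _ = 16 * δ ^ 2 * (X ^ 2 / X ^ 2) * exp (-x) := by ring
    _ ≤ 16 * δ ^ 2 * 1 * exp (-x) := by gcongr; exact div_self_le_one _
    _ ≤ 4 * exp (-x) * s ^ 2 := by nlinarith [exp_pos (-x)]

lemma norm_inv_one_sub_exp_le {z : ℂ} (hz : z.re < 0) :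
    ‖(1 - Complex.exp z)⁻¹‖ ≤ (1 - exp z.re)⁻¹ := by
  have h : 1 - exp z.re ≤ ‖1 - Complex.exp z‖ := by
    simpa [Complex.norm_exp] using norm_sub_norm_le (1 : ℂ) (Complex.exp z)
  rw [norm_inv]
  exact inv_anti₀ (by simpa using hz) h

lemma norm_inv_one_sub_exp_le_rpow_mul {z : ℂ} {X δ : ℝ} (hz : z.re < 0) (hzX : -z.re ≤ X)
    (hX : X ≤ 1) (hδ : 0 ≤ δ) (hs : 2 * δ ≤ |sin (z.im / 2)|) :
    ‖(1 - Complex.exp z)⁻¹‖ ≤ (1 + 5 * δ ^ 2 / X ^ 2) ^ (-(1 / 2 : ℝ)) * (1 - exp z.re)⁻¹ := by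
  set c := 5 * δ ^ 2 / X ^ 2
  have ha : 0 < 1 - exp z.re := by simpa using hz
  have hsq : (√(1 + c) * (1 - exp z.re)) ^ 2 ≤ ‖1 - Complex.exp z‖ ^ 2 := by
    have := mul_sq_one_sub_exp_neg_le (x := -z.re) (by linarith) hzX hX hδ hs
    rw [neg_neg] at this
    rw [mul_pow, sq_sqrt (by positivity), norm_one_sub_exp_sq]
    linarith
  rw [norm_inv, rpow_neg (by positivity), ← sqrt_eq_rpow, ← mul_inv]
  exact inv_anti₀ (by positivity) ((pow_le_pow_iff_left₀ (by positivity) (norm_nonneg _)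
    two_ne_zero).1 hsq)

lemma norm_inv_one_sub_exp_neg_mul_le {ρ : ℝ} (t : ℝ) {n : ℕ} (hρ : 0 < ρ) (hn : 0 < n) :
    ‖(1 - Complex.exp (-(ρ + t * Complex.I) * n))⁻¹‖ ≤ (1 - exp (-ρ * n))⁻¹ := by
  have hre : (-(ρ + t * Complex.I) * n).re = -ρ * n := by simp
  have hn' : (0 : ℝ) < n := by exact_mod_cast hn
  exact hre ▸ norm_inv_one_sub_exp_le (by rw [hre]; nlinarith)

lemma norm_inv_one_sub_exp_neg_mul_le_rpow_mul {ρ t X δ : ℝ} {n : ℕ} (hρ : 0 < ρ) (hn : 0 < n)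
    (hnX : ρ * n ≤ X) (hX : X ≤ 1) (hδ : 0 ≤ δ) (hdist : δ ≤ intDist (n * t / (2 * π))) :
    ‖(1 - Complex.exp (-(ρ + t * Complex.I) * n))⁻¹‖ ≤
      (1 + 5 * δ ^ 2 / X ^ 2) ^ (-(1 / 2 : ℝ)) * (1 - exp (-ρ * n))⁻¹ := by
  have hre : (-(ρ + t * Complex.I) * n).re = -ρ * n := by simp
  have him : (-(ρ + t * Complex.I) * n).im / 2 = -(π * (n * t / (2 * π))) := by
    rw [show (-(ρ + t * Complex.I) * n).im = -(t * n) by simp]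
    field_simp
  have hn' : (0 : ℝ) < n := by exact_mod_cast hn
  refine hre ▸ norm_inv_one_sub_exp_le_rpow_mul (by rw [hre]; nlinarith)
    (by rwa [hre, neg_mul, neg_neg]) hX hδ ?_
  rw [him, sin_neg, abs_neg]
  linarith [two_mul_intDist_le_abs_sin_pi_mul (n * t / (2 * π))]

lemma multipliable_inv_one_sub {𝕜 ι : Type*} [NormedField 𝕜] [CompleteSpace 𝕜] {z : ι → 𝕜}
    {r : ℝ} (hr : r < 1) (hzr : ∀ i, ‖z i‖ ≤ r) (hz : Summable (‖z ·‖)) :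
    Multipliable fun i ↦ (1 - z i)⁻¹ := by
  have hgap : ∀ i, 1 - r ≤ ‖1 - z i‖ := fun i ↦ by
    linarith [hzr i, norm_one (α := 𝕜) ▸ norm_sub_norm_le (1 : 𝕜) (z i)]
  have hne : ∀ i, 1 - z i ≠ 0 := fun i ↦ norm_pos_iff.1 (by linarith [hgap i])
  have hexpand : ∀ i, (1 - z i)⁻¹ = 1 + z i / (1 - z i) := fun i ↦ by
    field_simp [hne i]
    ring
  simp_rw [hexpand]
  refine multipliable_one_add_of_summable <|
    (hz.div_const (1 - r)).of_nonneg_of_le (fun _ ↦ norm_nonneg _) fun i ↦ ?_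
  rw [norm_div]
  exact div_le_div_of_nonneg_left (norm_nonneg _) (by linarith) (hgap i)

lemma multipliable_inv_one_sub_of_norm_eq_exp {𝕜 : Type*} [NormedField 𝕜] [CompleteSpace 𝕜]
    {Λ : Set ℕ} (hΛ : ∀ m ∈ Λ, 0 < m) {ρ : ℝ} (hρ : 0 < ρ) {z : Λ → 𝕜}
    (hz : ∀ m, ‖z m‖ = exp (-ρ * m)) :
    Multipliable fun m ↦ (1 - z m)⁻¹ := by
  have hsum : Summable fun n : ℕ ↦ exp (n * -ρ) := summable_exp_nat_mul_iff.2 (by linarith)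
  refine multipliable_inv_one_sub (r := exp (-ρ)) (by simpa using hρ) (fun m ↦ ?_) ?_
  · have hm : (1 : ℝ) ≤ m := by exact_mod_cast hΛ m m.2
    rw [hz]
    exact exp_le_exp.2 (by nlinarith)
  · exact (hsum.subtype Λ).congr fun m ↦ by simp [hz, mul_comm]

lemma tprod_le_pow_card_mul_tprod {ι : Type*} {f g : ι → ℝ} (hf : Multipliable f)
    (hg : Multipliable g) (S : Finset ι) {K : ℝ} (hf₀ : ∀ i, 0 ≤ f i) (hfg : ∀ i, f i ≤ g i)
    (hS : ∀ i ∈ S, f i ≤ K * g i) :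
    ∏' i, f i ≤ K ^ S.card * ∏' i, g i := by
  classical
  let k : ι → ℝ := fun i ↦ if i ∈ S then K else 1
  have hk : HasProd k (K ^ S.card) := by
    convert hasProd_prod_of_ne_finset_one (L := .unconditional ι) (s := S) (f := k)
      fun i hi ↦ if_neg hi
    rw [Finset.prod_congr rfl fun i hi ↦ if_pos hi, Finset.prod_const]
  refine le_of_tendsto_of_tendsto' hf.hasProd (hk.mul hg.hasProd) fun T ↦ ?_
  refine Finset.prod_le_prod (fun i _ ↦ hf₀ i) fun i _ ↦ ?_
  by_cases hi : i ∈ S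
  · simpa [k, hi] using hS i hi
  · simpa [k, hi] using hfg i

theorem euler_product_saddle_bound_general (Λ : Set ℕ) (hΛ : ∀ m ∈ Λ, 0 < m)
    (ρ : ℝ) (hρ : 0 < ρ) (t : ℝ) (q : ℕ)
    (S : Finset ℕ) (hSne : S.Nonempty) (hSΛ : (S : Set ℕ) ⊆ Λ)
    (hSsmall : ∀ m ∈ S, (m : ℝ) ≤ 1 / ρ)
    (hSdist : ∀ m ∈ S, 1 / (3 * (q : ℝ)) ≤ intDist ((m : ℝ) * t / (2 * Real.pi)))
    (F : ℂ → ℂ) (hF : ∀ s : ℂ, F s = ∏' m : Λ, (1 - Complex.exp (-s * (m : ℕ)))⁻¹)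
    (Fr : ℝ → ℝ) (hFr : ∀ x : ℝ, Fr x = ∏' m : Λ, (1 - Real.exp (-x * (m : ℕ)))⁻¹) :
    ‖F (ρ + t * Complex.I)‖ / Fr ρ ≤
      (1 + 5 / (9 * (q : ℝ) ^ 2 * (S.max' hSne : ℝ) ^ 2 * ρ ^ 2)) ^ (-(S.card : ℝ) / 2) := by
  classical
  set M := S.max' hSne
  have hMρ : ρ * M ≤ 1 := by
    have := hSsmall M (S.max'_mem hSne)
    rwa [le_div_iff₀ hρ, mul_comm] at this
  have hmult : Multipliable fun m : Λ ↦ (1 - Complex.exp (-(ρ + t * Complex.I) * m))⁻¹ :=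
    multipliable_inv_one_sub_of_norm_eq_exp hΛ hρ fun m ↦ by simp [Complex.norm_exp]
  have hmultr : Multipliable fun m : Λ ↦ (1 - exp (-ρ * m))⁻¹ :=
    multipliable_inv_one_sub_of_norm_eq_exp hΛ hρ fun m ↦ by simp
  have hweak (m : Λ) := norm_inv_one_sub_exp_neg_mul_le t hρ (hΛ m m.2)
  have hstrong (m : Λ) (hm : m ∈ S.subtype (· ∈ Λ)) := by
    rw [Finset.mem_subtype] at hm
    exact norm_inv_one_sub_exp_neg_mul_le_rpow_mul hρ (hΛ m m.2)
      (mul_le_mul_of_nonneg_left (by exact_mod_cast S.le_max' _ hm) hρ.le) hMρ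
      (by positivity) (hSdist m hm)
  have hcompare := tprod_le_pow_card_mul_tprod hmult.norm hmultr _ (fun _ ↦ norm_nonneg _)
    hweak hstrong
  rw [Finset.card_subtype, Finset.filter_true_of_mem fun m hm ↦ hSΛ hm] at hcompare
  have hc : 5 / (9 * (q : ℝ) ^ 2 * M ^ 2 * ρ ^ 2) = 5 * (1 / (3 * (q : ℝ))) ^ 2 / (ρ * M) ^ 2 := by
    ring
  rw [hF, hFr, hmult.norm_tprod, hc, rpow_neg_natCast_div_two (by positivity)]
  exact div_le_of_le_mul₀ (tprod_nonneg fun m ↦ (norm_nonneg _).trans (hweak m)) (by positivity)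
    hcompare

theorem euler_product_saddle_bound (Λ : Set ℕ) (hΛ : ∀ m ∈ Λ, 0 < m)
    (ρ : ℝ) (hρ : 0 < ρ) (t : ℝ) (q : ℕ) (hq : 1 ≤ q)
    (S : Finset ℕ) (hSne : S.Nonempty) (hSΛ : (S : Set ℕ) ⊆ Λ)
    (hSsmall : ∀ m ∈ S, (m : ℝ) ≤ 1 / ρ)
    (hSdist : ∀ m ∈ S, 1 / (3 * (q : ℝ)) ≤ intDist ((m : ℝ) * t / (2 * Real.pi)))
    (F : ℂ → ℂ) (hF : ∀ s : ℂ, F s = ∏' m : Λ, (1 - Complex.exp (-s * (m : ℕ)))⁻¹)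
    (Fr : ℝ → ℝ) (hFr : ∀ x : ℝ, Fr x = ∏' m : Λ, (1 - Real.exp (-x * (m : ℕ)))⁻¹) :
    ‖F (ρ + t * Complex.I)‖ / Fr ρ ≤
      (1 + 5 / (9 * (q : ℝ) ^ 2 * (S.max' hSne : ℝ) ^ 2 * ρ ^ 2)) ^ (-(S.card : ℝ) / 2) :=
  euler_product_saddle_bound_general Λ hΛ ρ hρ t q S hSne hSΛ hSsmall hSdist F hF Fr hFr
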